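/- arXiv:0907.3086 — 4 statements merged into one kernel-verified Lean document; each statement's English description precedes it below -/
import Mathlib

section
/- If a_1, …, a_m is a nontrivial cycle of T of length m (i.e., a_i ≠ 1 for all i), then 3^m < 2^{S_m} < (3 + 1/a_min)^m. -/
/-- The Collatz odd-step map: `T x = (3x+1)/2^{v₂(3x+1)}`. -/
def T (x : ℕ) : ℕ := (3 * x + 1) / 2 ^ (padicValNat 2 (3 * x + 1))

lemma T_key (x : ℕ) : 2 ^ (padicValNat 2 (3 * x + 1)) * T x = 3 * x + 1 := by
  unfold T
  exact Nat.mul_div_cancel' pow_padicValNat_dvd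

theorem stmt_3 (m : ℕ) (hm : 1 ≤ m) (a : ℕ → ℕ)
    (hpos : ∀ i, 1 ≤ i → i ≤ m → 0 < a i)
    (hodd : ∀ i, 1 ≤ i → i ≤ m → Odd (a i))
    (hstep : ∀ i, 1 ≤ i → i < m → a (i + 1) = T (a i))
    (hloop : T (a m) = a 1)
    (hnontriv : ∀ i, 1 ≤ i → i ≤ m → a i ≠ 1)
    (S : ℕ → ℕ)
    (hS : ∀ r, S r = ∑ i ∈ Finset.Icc 1 r, padicValNat 2 (3 * a i + 1))
    (amin : ℕ)
    (hamin : amin = (Finset.Icc 1 m).inf' (Finset.nonempty_Icc.mpr hm) a) :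
    (3 : ℝ) ^ m < (2 : ℝ) ^ (S m) ∧ (2 : ℝ) ^ (S m) < (3 + 1 / (amin : ℝ)) ^ m := by
  classical
  set s : Finset ℕ := Finset.Icc 1 m with hs
  have hne : s.Nonempty := Finset.nonempty_Icc.mpr hm
  have hmem : ∀ i ∈ s, 1 ≤ i ∧ i ≤ m := by
    intro i hi; exact Finset.mem_Icc.mp hi
  -- the "next" map on the cycle
  set nxt : ℕ → ℕ := fun i => if i = m then 1 else i + 1 with hnxt
  set prv : ℕ → ℕ := fun i => if i = 1 then m else i - 1 with hprv
  have hnxt_mem : ∀ i ∈ s, nxt i ∈ s := by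
    intro i hi; obtain ⟨h1, h2⟩ := hmem i hi
    rw [hs, Finset.mem_Icc]; simp only [hnxt]; split <;> omega
  have hprv_mem : ∀ i ∈ s, prv i ∈ s := by
    intro i hi; obtain ⟨h1, h2⟩ := hmem i hi
    rw [hs, Finset.mem_Icc]; simp only [hprv]; split <;> omega
  have hli : ∀ i ∈ s, prv (nxt i) = i := by
    intro i hi; obtain ⟨h1, h2⟩ := hmem i hi
    by_cases h : i = m <;> simp [hnxt, hprv, h] ; omega
  have hri : ∀ i ∈ s, nxt (prv i) = i := by
    intro i hi; obtain ⟨h1, h2⟩ := hmem i hi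
    by_cases h : i = 1
    · simp [hnxt, hprv, h]
    · have : i - 1 ≠ m := by omega
      simp [hnxt, hprv, h, this]; omega
  -- key step equality
  have hkey : ∀ i ∈ s, 3 * a i + 1 = 2 ^ (padicValNat 2 (3 * a i + 1)) * a (nxt i) := by
    intro i hi; obtain ⟨h1, h2⟩ := hmem i hi
    by_cases h : i = m
    · subst h; simp [hnxt, ← hloop, T_key]
    · have : a (i + 1) = T (a i) := hstep i h1 (by omega)
      simp [hnxt, h, this, T_key]
  -- positivity
  have hposR : ∀ i ∈ s, (0:ℝ) < (a i : ℝ) := by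
    intro i hi; obtain ⟨h1, h2⟩ := hmem i hi
    exact_mod_cast hpos i h1 h2
  have hPpos : (0:ℝ) < ∏ i ∈ s, (a i : ℝ) := Finset.prod_pos hposR
  -- product identity in ℕ
  have hshift : ∏ i ∈ s, a (nxt i) = ∏ i ∈ s, a i :=
    Finset.prod_nbij' nxt prv hnxt_mem hprv_mem hli hri (fun i _ => rfl)
  have hprod : 2 ^ (S m) * ∏ i ∈ s, a i = ∏ i ∈ s, (3 * a i + 1) := by
    rw [hS m, ← Finset.prod_pow_eq_pow_sum, ← hshift, ← Finset.prod_mul_distrib]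
    exact Finset.prod_congr rfl fun i hi => (hkey i hi).symm
  have hprodR : (2:ℝ) ^ (S m) * ∏ i ∈ s, (a i : ℝ) = ∏ i ∈ s, (3 * (a i : ℝ) + 1) := by
    have := congrArg (fun n : ℕ => (n : ℝ)) hprod
    push_cast at this
    convert this using 2
  -- amin facts
  have hamin_le : ∀ i ∈ s, amin ≤ a i := by
    intro i hi; rw [hamin]; exact Finset.inf'_le a hi
  obtain ⟨i₀, hi₀, hi₀eq⟩ : ∃ i ∈ s, amin = a i := by
    rw [hamin]; exact Finset.exists_mem_eq_inf' _ a
  have hamin_pos : 0 < amin := by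
    rw [hi₀eq]; obtain ⟨h1, h2⟩ := hmem i₀ hi₀; exact hpos i₀ h1 h2
  have hamin_ne1 : amin ≠ 1 := by
    rw [hi₀eq]; obtain ⟨h1, h2⟩ := hmem i₀ hi₀; exact hnontriv i₀ h1 h2
  -- left inequality
  have hleft : (3:ℝ) ^ m < (2:ℝ) ^ (S m) := by
    have h1 : ∏ i ∈ s, (3 * (a i : ℝ)) < ∏ i ∈ s, (3 * (a i : ℝ) + 1) := by
      apply Finset.prod_lt_prod_of_nonempty _ _ hne
      · intro i hi; have := hposR i hi; positivity
      · intro i hi; linarith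
    rw [Finset.prod_mul_distrib, Finset.prod_const] at h1
    have hcard : s.card = m := by rw [hs, Nat.card_Icc]; omega
    rw [hcard, ← hprodR] at h1
    exact lt_of_mul_lt_mul_right h1 hPpos.le
  refine ⟨hleft, ?_⟩
  -- right inequality: need some i with amin < a i, or contradiction
  have hstrict : ∃ i ∈ s, amin < a i := by
    by_contra h
    push_neg at h
    have hall : ∀ i ∈ s, a i = amin := by
      intro i hi; exact le_antisymm (h i hi) (hamin_le i hi)
    -- then T(amin) = amin
    have h1 : a 1 = amin := hall 1 (Finset.mem_Icc.mpr ⟨le_refl 1, hm⟩)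
    have h2 : a m = amin := hall m (Finset.mem_Icc.mpr ⟨hm, le_refl m⟩)
    have hT : 2 ^ (padicValNat 2 (3 * amin + 1)) * amin = 3 * amin + 1 := by
      have := T_key (a m)
      rw [hloop, h1, h2] at this; exact this
    have hd : amin ∣ 3 * amin + 1 := ⟨2 ^ (padicValNat 2 (3 * amin + 1)), by linarith [hT]⟩
    have hdvd : amin ∣ 1 := (Nat.dvd_add_right (dvd_mul_left amin 3)).mp hd
    exact hamin_ne1 (Nat.dvd_one.mp hdvd)
  -- right inequality
  have haminR : (0:ℝ) < (amin : ℝ) := by exact_mod_cast hamin_pos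
  have hright : ∏ i ∈ s, (3 * (a i : ℝ) + 1) < ∏ i ∈ s, ((3 + 1 / (amin:ℝ)) * a i) := by
    apply Finset.prod_lt_prod
    · intro i hi; have := hposR i hi; positivity
    · intro i hi
      have h1 : (amin:ℝ) ≤ a i := by exact_mod_cast hamin_le i hi
      have h2 : (1:ℝ) ≤ (a i : ℝ) / amin := (one_le_div haminR).mpr h1
      have : (3 + 1 / (amin:ℝ)) * a i = 3 * a i + a i / amin := by
        field_simp
      rw [this]; linarith
    · obtain ⟨i, hi, hilt⟩ := hstrict
      refine ⟨i, hi, ?_⟩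
      have h1 : (amin:ℝ) < a i := by exact_mod_cast hilt
      have h2 : (1:ℝ) < (a i : ℝ) / amin := (one_lt_div haminR).mpr h1
      have : (3 + 1 / (amin:ℝ)) * a i = 3 * a i + a i / amin := by
        field_simp
      rw [this]; linarith
  rw [Finset.prod_mul_distrib, Finset.prod_const] at hright
  have hcard : s.card = m := by rw [hs, Nat.card_Icc]; omega
  rw [hcard, ← hprodR] at hright
  exact lt_of_mul_lt_mul_right hright hPpos.le
end

section
/- If a_1, …, a_m is a nontrivial cycle of T of length m (i.e., a_i ≠ 1 for all i), then m·log₂(1 + 1/(3·a_min)) > 1 − fract(m·log₂ 3), where fract denotes the fractional part. -/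
/-!
Multiplying the relations `a_{i+1} · 2^{v_i} = 3 a_i + 1` around the cycle and taking `log₂` gives
`K = m log₂ 3 + S` with `K = ∑ v_i ∈ ℕ` and `S = ∑ log₂ (1 + 1/(3 a_i)) > 0`. Since `K` is an integer
exceeding `m log₂ 3`, `S ≥ 1 - fract (m log₂ 3)`. Each term of `S` is at most `log₂ (1 + 1/(3 a_min))`,
and strictly so for the successor of the minimum, because `T` has no fixed point other than `1`.
-/

open Finset Real

lemma T_mul_two_pow (x : ℕ) : T x * 2 ^ padicValNat 2 (3 * x + 1) = 3 * x + 1 :=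
  Nat.div_mul_cancel pow_padicValNat_dvd

lemma T_pos (x : ℕ) : 0 < T x := by
  rw [T, Nat.div_pos_iff]
  exact ⟨by positivity, Nat.le_of_dvd (by omega) pow_padicValNat_dvd⟩

lemma T_ne_self {x : ℕ} (hx : 1 < x) : T x ≠ x := by
  intro hfix
  have hdvd : x ∣ 3 * x + 1 := ⟨_, by rw [← T_mul_two_pow x, hfix]⟩
  have := Nat.le_of_dvd one_pos ((Nat.dvd_add_right (dvd_mul_left x 3)).mp hdvd)
  omega

def cycSucc (m i : ℕ) : ℕ := if i = m then 1 else i + 1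

lemma cycSucc_bijOn {m : ℕ} (hm : 1 ≤ m) :
    Set.BijOn (cycSucc m) (Icc 1 m : Set ℕ) (Icc 1 m : Set ℕ) := by
  refine Set.InvOn.bijOn (f' := fun i => if i = 1 then m else i - 1) ⟨?_, ?_⟩ ?_ ?_ <;>
  · intro i hi
    simp only [coe_Icc, Set.mem_Icc, cycSucc] at hi ⊢
    split_ifs <;> omega

lemma apply_cycSucc_eq_T {m : ℕ} {a : ℕ → ℕ} (hstep : ∀ i, 1 ≤ i → i < m → a (i + 1) = T (a i))
    (hloop : T (a m) = a 1) : ∀ i ∈ Icc 1 m, a (cycSucc m i) = T (a i) := by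
  intro i hi
  obtain ⟨h1, h2⟩ := mem_Icc.mp hi
  unfold cycSucc
  split_ifs with h
  · rw [h, hloop]
  · exact hstep i h1 (by omega)

lemma strictAntiOn_logb_one_add_one_div_three_mul :
    StrictAntiOn (fun x : ℝ => logb 2 (1 + 1 / (3 * x))) (Set.Ioi 0) := by
  intro x hx y hy hxy
  simp only [Set.mem_Ioi] at hx hy
  apply logb_lt_logb one_lt_two (by positivity)
  gcongr

lemma logb_one_add_one_div_three_mul_pos {x : ℝ} (hx : 0 < x) : 0 < logb 2 (1 + 1 / (3 * x)) :=
  logb_pos one_lt_two (by simp only [lt_add_iff_pos_right]; positivity)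

section

variable {ι : Type*} {s : Finset ι} {a : ι → ℕ}

lemma prod_mul_two_pow_sum_eq_prod {σ : ι → ι} (hσ : Set.BijOn σ s s) {v : ι → ℕ}
    (h : ∀ i ∈ s, a (σ i) * 2 ^ v i = 3 * a i + 1) :
    (∏ i ∈ s, a i) * 2 ^ ∑ i ∈ s, v i = ∏ i ∈ s, (3 * a i + 1) := by
  rw [← prod_nbij σ hσ.mapsTo hσ.injOn hσ.surjOn (fun _ _ => rfl), ← prod_pow_eq_pow_sum,
    ← prod_mul_distrib]
  exact prod_congr rfl h

lemma logb_two_three_mul_add_one {x : ℝ} (hx : 0 < x) :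
    logb 2 (3 * x + 1) = logb 2 3 + logb 2 x + logb 2 (1 + 1 / (3 * x)) := by
  have hfactor : 3 * x + 1 = 3 * x * (1 + 1 / (3 * x)) := by field_simp
  rw [hfactor, logb_mul (by positivity) (by positivity), logb_mul (by norm_num) hx.ne']

lemma cast_eq_card_mul_logb_add_sum (ha : ∀ i ∈ s, 0 < a i) {K : ℕ}
    (h : (∏ i ∈ s, a i) * 2 ^ K = ∏ i ∈ s, (3 * a i + 1)) :
    (K : ℝ) = s.card * logb 2 3 + ∑ i ∈ s, logb 2 (1 + 1 / (3 * (a i : ℝ))) := by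
  have ha' : ∀ i ∈ s, (0 : ℝ) < a i := fun i hi => by exact_mod_cast ha i hi
  have hlog := congrArg (fun n : ℕ => logb 2 (n : ℝ)) h
  simp only [Nat.cast_mul, Nat.cast_prod, Nat.cast_pow, Nat.cast_add, Nat.cast_ofNat,
    Nat.cast_one] at hlog
  rw [logb_mul (prod_pos ha').ne' (by positivity), logb_pow, logb_self_eq_one one_lt_two,
    logb_prod _ _ fun i hi => (ha' i hi).ne', logb_prod _ _ fun i hi => by positivity] at hlog
  rw [sum_congr rfl fun i hi => logb_two_three_mul_add_one (ha' i hi), sum_add_distrib,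
    sum_add_distrib, sum_const, nsmul_eq_mul] at hlog
  linarith

lemma sum_logb_one_add_one_div_three_mul_lt {b : ℕ} (hb : 0 < b) (hle : ∀ i ∈ s, b ≤ a i)
    (hlt : ∃ j ∈ s, b < a j) :
    ∑ i ∈ s, logb 2 (1 + 1 / (3 * (a i : ℝ))) < s.card * logb 2 (1 + 1 / (3 * (b : ℝ))) := by
  have hb' : (0 : ℝ) < b := by exact_mod_cast hb
  have ha' : ∀ i ∈ s, (a i : ℝ) ∈ Set.Ioi 0 := fun i hi => by
    simp only [Set.mem_Ioi]; exact_mod_cast hb.trans_le (hle i hi)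
  rw [← nsmul_eq_mul, ← sum_const]
  obtain ⟨j, hj, hbj⟩ := hlt
  refine sum_lt_sum (fun i hi => ?_) ⟨j, hj, ?_⟩
  · exact strictAntiOn_logb_one_add_one_div_three_mul.antitoneOn hb' (ha' i hi)
      (by exact_mod_cast hle i hi)
  · exact strictAntiOn_logb_one_add_one_div_three_mul hb' (ha' j hj) (by exact_mod_cast hbj)

end

lemma one_sub_fract_le_of_cast_eq_add {x S : ℝ} {K : ℤ} (hK : (K : ℝ) = x + S) (hS : 0 < S) :
    1 - Int.fract x ≤ S := by
  have hfloor : ⌊x⌋ < K := Int.floor_lt.mpr (by linarith)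
  have : (⌊x⌋ : ℝ) + 1 ≤ K := by exact_mod_cast hfloor
  rw [Int.fract]
  linarith

theorem stmt_6_general (m : ℕ) (hm : 1 ≤ m) (a : ℕ → ℕ)
    (hstep : ∀ i, 1 ≤ i → i < m → a (i + 1) = T (a i))
    (hloop : T (a m) = a 1)
    (hnontriv : ∀ i, 1 ≤ i → i ≤ m → a i ≠ 1)
    (amin : ℕ)
    (hamin : amin = (Finset.Icc 1 m).inf' (Finset.nonempty_Icc.mpr hm) a) :
    (m : ℝ) * Real.logb 2 (1 + 1 / (3 * (amin : ℝ)))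
      > 1 - Int.fract ((m : ℝ) * Real.logb 2 3) := by
  have hσ := cycSucc_bijOn hm
  have hcycle := apply_cycSucc_eq_T hstep hloop
  have hcard : (Icc 1 m).card = m := by simp
  have hpos : ∀ j ∈ Icc 1 m, 0 < a j := fun j hj => by
    obtain ⟨i, hi, rfl⟩ := hσ.surjOn hj
    exact hcycle i hi ▸ T_pos _
  obtain ⟨i₀, hi₀, hmin⟩ := exists_mem_eq_inf' (nonempty_Icc.mpr hm) a
  have hle : ∀ i ∈ Icc 1 m, amin ≤ a i := fun i hi => hamin ▸ inf'_le a hi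
  rw [hmin] at hamin
  subst hamin
  have hmin_gt : 1 < a i₀ := by
    have := hnontriv i₀ (mem_Icc.mp hi₀).1 (mem_Icc.mp hi₀).2
    have := hpos i₀ hi₀
    omega
  have hsucc_gt : a i₀ < a (cycSucc m i₀) :=
    lt_of_le_of_ne (hle _ (hσ.mapsTo hi₀)) (hcycle i₀ hi₀ ▸ T_ne_self hmin_gt).symm
  have hK := cast_eq_card_mul_logb_add_sum hpos
    (prod_mul_two_pow_sum_eq_prod hσ fun i hi => hcycle i hi ▸ T_mul_two_pow (a i))
  rw [hcard] at hK
  calc 1 - Int.fract ((m : ℝ) * logb 2 3)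
      ≤ ∑ i ∈ Icc 1 m, logb 2 (1 + 1 / (3 * (a i : ℝ))) :=
        one_sub_fract_le_of_cast_eq_add (by exact_mod_cast hK)
          (sum_pos (fun i hi => logb_one_add_one_div_three_mul_pos (by exact_mod_cast hpos i hi))
            ⟨i₀, hi₀⟩)
    _ < m * logb 2 (1 + 1 / (3 * (a i₀ : ℝ))) := by
        simpa only [hcard] using
          sum_logb_one_add_one_div_three_mul_lt (hpos i₀ hi₀) hle ⟨_, hσ.mapsTo hi₀, hsucc_gt⟩

theorem stmt_6 (m : ℕ) (hm : 1 ≤ m) (a : ℕ → ℕ)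
    (hpos : ∀ i, 1 ≤ i → i ≤ m → 0 < a i)
    (hodd : ∀ i, 1 ≤ i → i ≤ m → Odd (a i))
    (hstep : ∀ i, 1 ≤ i → i < m → a (i + 1) = T (a i))
    (hloop : T (a m) = a 1)
    (hnontriv : ∀ i, 1 ≤ i → i ≤ m → a i ≠ 1)
    (amin : ℕ)
    (hamin : amin = (Finset.Icc 1 m).inf' (Finset.nonempty_Icc.mpr hm) a) :
    (m : ℝ) * Real.logb 2 (1 + 1 / (3 * (amin : ℝ)))
      > 1 - Int.fract ((m : ℝ) * Real.logb 2 3) :=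
  stmt_6_general m hm a hstep hloop hnontriv amin hamin
end

section
/- If a_1, …, a_m is a nontrivial cycle of T of length m (i.e., a_i ≠ 1 for all i), then a_min < 1/(3·(2^{(1 − fract(m·log₂ 3))/m} − 1)), where fract denotes the fractional part. -/
lemma T_mul (x : ℕ) : T x * 2 ^ (padicValNat 2 (3 * x + 1)) = 3 * x + 1 :=
  Nat.div_mul_cancel pow_padicValNat_dvd

lemma T_fixed (c : ℕ) (h : T c = c) : c = 1 := by
  have h2 : c * 2 ^ padicValNat 2 (3 * c + 1) = 3 * c + 1 := by
    have := T_mul c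
    rwa [h] at this
  have hdvd : c ∣ 3 * c + 1 := ⟨_, h2.symm⟩
  have : c ∣ 1 := (Nat.dvd_add_right (dvd_mul_left c 3)).mp hdvd
  exact Nat.dvd_one.mp this

theorem stmt_8 (m : ℕ) (hm : 1 ≤ m) (a : ℕ → ℕ)
    (hpos : ∀ i, 1 ≤ i → i ≤ m → 0 < a i)
    (hodd : ∀ i, 1 ≤ i → i ≤ m → Odd (a i))
    (hstep : ∀ i, 1 ≤ i → i < m → a (i + 1) = T (a i))
    (hloop : T (a m) = a 1)
    (hnontriv : ∀ i, 1 ≤ i → i ≤ m → a i ≠ 1)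
    (amin : ℕ)
    (hamin : amin = (Finset.Icc 1 m).inf' (Finset.nonempty_Icc.mpr hm) a) :
    (amin : ℝ) <
      1 / (3 * ((2 : ℝ)
        ^ ((1 - Int.fract ((m : ℝ) * Real.logb 2 3)) / (m : ℝ)) - 1)) := by
  classical
  set s : Finset ℕ := Finset.Icc 1 m with hs
  have hmem : ∀ i, i ∈ s ↔ 1 ≤ i ∧ i ≤ m := by intro i; simp [hs]
  have h1s : (1 : ℕ) ∈ s := (hmem 1).mpr ⟨le_refl 1, hm⟩
  have hms : m ∈ s := (hmem m).mpr ⟨hm, le_refl m⟩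
  set v : ℕ → ℕ := fun i => padicValNat 2 (3 * a i + 1) with hv
  set K : ℕ := ∑ i ∈ s, v i with hK
  have haminle : ∀ i ∈ s, amin ≤ a i := by
    intro i hi; rw [hamin]; exact Finset.inf'_le a hi
  have haminpos : 0 < amin := by
    obtain ⟨i0, hi0, h0⟩ := Finset.exists_mem_eq_inf' (Finset.nonempty_Icc.mpr hm) a
    rw [hamin, h0]; exact hpos i0 ((hmem i0).mp hi0).1 ((hmem i0).mp hi0).2
  -- cyclic reindexing
  have hnext : ∏ i ∈ s, a (if i = m then 1 else i + 1) = ∏ i ∈ s, a i := by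
    refine Finset.prod_nbij' (fun i => if i = m then 1 else i + 1)
      (fun j => if j = 1 then m else j - 1) ?_ ?_ ?_ ?_ ?_
    · intro i hi; have h' := (hmem i).mp hi
      simp only [hmem]; split_ifs <;> omega
    · intro j hj; have h' := (hmem j).mp hj
      simp only [hmem]; split_ifs <;> omega
    · intro i hi; have h' := (hmem i).mp hi
      split_ifs <;> omega
    · intro j hj; have h' := (hmem j).mp hj
      split_ifs <;> omega
    · intro i _; rfl
  -- key identity
  have key : ∀ i ∈ s, 3 * a i + 1 = a (if i = m then 1 else i + 1) * 2 ^ v i := by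
    intro i hi
    obtain ⟨h1, h2⟩ := (hmem i).mp hi
    by_cases h : i = m
    · rw [if_pos h, h, ← hloop]; exact (T_mul (a m)).symm
    · rw [if_neg h, hstep i h1 (lt_of_le_of_ne h2 h)]; exact (T_mul (a i)).symm
  have hprodN : ∏ i ∈ s, (3 * a i + 1) = (∏ i ∈ s, a i) * 2 ^ K := by
    rw [Finset.prod_congr rfl key, Finset.prod_mul_distrib, hnext,
      Finset.prod_pow_eq_pow_sum]
  have hPposN : 0 < ∏ i ∈ s, a i :=
    Finset.prod_pos fun i hi => hpos i ((hmem i).mp hi).1 ((hmem i).mp hi).2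
  have hcard : s.card = m := by simp [hs]
  -- lower bound: 3^m < 2^K
  have h3K : 3 ^ m < 2 ^ K := by
    have hlt : ∏ i ∈ s, (3 * a i) < ∏ i ∈ s, (3 * a i + 1) :=
      Finset.prod_lt_prod_of_nonempty
        (fun i hi => Nat.mul_pos (by norm_num)
          (hpos i ((hmem i).mp hi).1 ((hmem i).mp hi).2))
        (fun i hi => Nat.lt_succ_self _)
        (Finset.nonempty_Icc.mpr hm)
    rw [Finset.prod_mul_distrib, Finset.prod_const, hcard, hprodN] at hlt
    have hlt2 : (∏ i ∈ s, a i) * 3 ^ m < (∏ i ∈ s, a i) * 2 ^ K := by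
      calc (∏ i ∈ s, a i) * 3 ^ m = 3 ^ m * ∏ i ∈ s, a i := by ring
        _ < (∏ i ∈ s, a i) * 2 ^ K := hlt
    exact Nat.lt_of_mul_lt_mul_left hlt2
  -- strict index
  have hex : ∃ j ∈ s, amin < a j := by
    by_contra hcon
    push_neg at hcon
    have hall : ∀ j ∈ s, a j = amin := fun j hj =>
      le_antisymm (hcon j hj) (haminle j hj)
    have hfix : T amin = amin :=
      calc T amin = T (a m) := by rw [hall m hms]
        _ = a 1 := hloop
        _ = amin := hall 1 h1s
    exact hnontriv 1 le_rfl hm (by rw [hall 1 h1s]; exact T_fixed amin hfix)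
  -- real setup
  set x : ℝ := (m : ℝ) * Real.logb 2 3 with hx
  set f : ℝ := Int.fract x with hf
  have hmR : (0 : ℝ) < m := by exact_mod_cast hm
  have haminR : (0 : ℝ) < amin := by exact_mod_cast haminpos
  have hKx : x < (K : ℝ) := by
    have h1 : (3 : ℝ) ^ m < 2 ^ K := by exact_mod_cast h3K
    have h2 : Real.logb 2 ((3:ℝ) ^ m) < Real.logb 2 ((2:ℝ) ^ K) :=
      Real.logb_lt_logb (by norm_num) (by positivity) h1
    have hlb : Real.logb 2 2 = 1 := by simp
    rwa [Real.logb_pow, Real.logb_pow, hlb, mul_one] at h2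
  have hKge : x + (1 - f) ≤ (K : ℝ) := by
    have hfl : (⌊x⌋ : ℤ) < (K : ℤ) := by
      rw [Int.floor_lt]; exact_mod_cast hKx
    have h1 : ((⌊x⌋ : ℤ) : ℝ) + 1 ≤ (K : ℝ) := by exact_mod_cast hfl
    have hfr : ((⌊x⌋ : ℤ) : ℝ) = x - f := by rw [hf, Int.self_sub_fract]
    linarith
  have hlow : (3 : ℝ) ^ m * (2 : ℝ) ^ (1 - f) ≤ (2 : ℝ) ^ (K : ℝ) := by
    have h1 : (2 : ℝ) ^ (x + (1 - f)) ≤ (2 : ℝ) ^ (K : ℝ) :=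
      Real.rpow_le_rpow_of_exponent_le (by norm_num) hKge
    rw [Real.rpow_add (by norm_num)] at h1
    have h2 : (2 : ℝ) ^ x = (3 : ℝ) ^ m := by
      rw [hx, mul_comm, Real.rpow_mul (by norm_num), Real.rpow_logb (by norm_num)
        (by norm_num) (by norm_num), Real.rpow_natCast]
    rwa [h2] at h1
  -- upper bound: 2^K < (3 + 1/amin)^m
  have hup : (2 : ℝ) ^ (K : ℝ) < (3 + 1 / (amin : ℝ)) ^ m := by
    obtain ⟨j0, hj0, hj0lt⟩ := hex
    have hfac : ∀ i ∈ s, (3 * (a i : ℝ) + 1) ≤ (3 + 1 / (amin:ℝ)) * a i := by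
      intro i hi
      have hai : (amin : ℝ) ≤ a i := by exact_mod_cast haminle i hi
      have h1d : (1 : ℝ) ≤ (a i : ℝ) / amin := (one_le_div haminR).mpr hai
      have hexp : (3 + 1 / (amin:ℝ)) * a i = 3 * a i + a i / amin := by ring
      rw [hexp]; linarith
    have hstrict : (3 * (a j0 : ℝ) + 1) < (3 + 1 / (amin:ℝ)) * a j0 := by
      have hai : (amin : ℝ) < a j0 := by exact_mod_cast hj0lt
      have h1d : (1 : ℝ) < (a j0 : ℝ) / amin := (one_lt_div haminR).mpr hai
      have hexp : (3 + 1 / (amin:ℝ)) * a j0 = 3 * a j0 + a j0 / amin := by ring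
      rw [hexp]; linarith
    have hprodR : ∏ i ∈ s, (3 * (a i:ℝ) + 1) <
        ∏ i ∈ s, ((3 + 1 / (amin:ℝ)) * a i) :=
      Finset.prod_lt_prod (fun i hi => by positivity) hfac ⟨j0, hj0, hstrict⟩
    have hprodNR : ∏ i ∈ s, (3 * (a i:ℝ) + 1) =
        (∏ i ∈ s, (a i:ℝ)) * 2 ^ K := by
      have h0 : (∏ i ∈ s, ((3 * a i + 1 : ℕ) : ℝ)) =
          (∏ i ∈ s, ((a i : ℕ) : ℝ)) * 2 ^ K := by
        rw [← Nat.cast_prod, ← Nat.cast_prod, hprodN]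
        push_cast
        ring
      convert h0 using 2 with i
      push_cast
      ring
    rw [Finset.prod_mul_distrib, Finset.prod_const, hcard, hprodNR] at hprodR
    have hPRpos : (0:ℝ) < ∏ i ∈ s, (a i:ℝ) :=
      Finset.prod_pos fun i hi => by
        exact_mod_cast hpos i ((hmem i).mp hi).1 ((hmem i).mp hi).2
    have h2 : (2 : ℝ) ^ K < (3 + 1 / (amin:ℝ)) ^ m := by
      have h' : (∏ i ∈ s, (a i:ℝ)) * 2 ^ K <
          (∏ i ∈ s, (a i:ℝ)) * (3 + 1 / (amin:ℝ)) ^ m := by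
        rw [mul_comm (∏ i ∈ s, (a i:ℝ)) ((3 + 1 / (amin:ℝ)) ^ m)]
        exact hprodR
      exact lt_of_mul_lt_mul_left h' hPRpos.le
    rwa [Real.rpow_natCast]
  -- combine and take m-th roots
  have hAB : (3 : ℝ) ^ m * (2 : ℝ) ^ (1 - f) < (3 + 1 / (amin : ℝ)) ^ m :=
    lt_of_le_of_lt hlow hup
  have hroot : 3 * (2 : ℝ) ^ ((1 - f) / m) < 3 + 1 / (amin : ℝ) := by
    have hApos : (0 : ℝ) ≤ (3 : ℝ) ^ m * (2 : ℝ) ^ (1 - f) := by positivity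
    have h1 := Real.rpow_lt_rpow hApos hAB (by positivity : (0:ℝ) < 1 / m)
    have hL : ((3 : ℝ) ^ m * (2 : ℝ) ^ (1 - f)) ^ ((1:ℝ) / m) =
        3 * (2 : ℝ) ^ ((1 - f) / m) := by
      rw [Real.mul_rpow (by positivity) (by positivity),
        ← Real.rpow_natCast (3:ℝ) m, ← Real.rpow_mul (by norm_num),
        ← Real.rpow_mul (by norm_num)]
      rw [mul_one_div, div_self (ne_of_gt hmR), Real.rpow_one, mul_one_div]
    have hR : ((3 + 1 / (amin : ℝ)) ^ m) ^ ((1:ℝ) / m) = 3 + 1 / (amin : ℝ) := by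
      rw [← Real.rpow_natCast (3 + 1 / (amin : ℝ)) m, ← Real.rpow_mul (by positivity),
        mul_one_div, div_self (ne_of_gt hmR), Real.rpow_one]
    rw [hL, hR] at h1
    exact h1
  -- final arithmetic
  set t : ℝ := (2 : ℝ) ^ ((1 - f) / m) with ht
  have ht1 : 1 < t := by
    rw [ht]
    refine (Real.one_lt_rpow_iff_of_pos (by norm_num)).mpr (Or.inl ⟨by norm_num, ?_⟩)
    exact div_pos (by linarith [Int.fract_lt_one x]) hmR
  have hc : (0 : ℝ) < 3 * (t - 1) := by linarith
  rw [lt_div_iff₀ hc]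
  have h2 : 3 * (t - 1) < 1 / amin := by linarith
  calc (amin : ℝ) * (3 * (t - 1)) < (amin : ℝ) * (1 / amin) :=
        mul_lt_mul_of_pos_left h2 haminR
    _ = 1 := by field_simp
end

section
/- If a_1, …, a_m is a nontrivial cycle of T of length m (i.e., a_i ≠ 1 for all i) with a_min ≥ 19·2^58 and m·log₂(1 + 1/(3·a_min)) < 1 (a β-loop), then m ≥ 6586818670. -/
open Finset

private lemma series_bound (q : ℝ) (hq0 : 0 < q) (hq1 : q < 1) (n : ℕ) :
    |(∑ i ∈ range n, q ^ (i + 1) / (i + 1)) + Real.log (1 - q)| ≤ q ^ (n + 1) / (1 - q) := by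
  have h := Real.abs_log_sub_add_sum_range_le (x := q) (by rw [abs_of_pos hq0]; exact hq1) n
  rwa [abs_of_pos hq0] at h

private lemma ident2 : Real.log 2 = -7 * Real.log (9/10) + 2 * Real.log (24/25) - 3 * Real.log (80/81) := by
  have e : ((2:ℝ)) * (9/10)^(7:ℕ) * (80/81)^(3:ℕ) = (24/25)^(2:ℕ) := by norm_num
  have := congrArg Real.log e
  rw [Real.log_mul (by norm_num) (by norm_num), Real.log_mul (by norm_num) (by norm_num),
    Real.log_pow, Real.log_pow, Real.log_pow] at this
  push_cast at this
  linarith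

private lemma ident3 : Real.log 3 = -11 * Real.log (9/10) + 3 * Real.log (24/25) - 5 * Real.log (80/81) := by
  have e : ((3:ℝ)) * (9/10)^(11:ℕ) * (80/81)^(5:ℕ) = (24/25)^(3:ℕ) := by norm_num
  have := congrArg Real.log e
  rw [Real.log_mul (by norm_num) (by norm_num), Real.log_mul (by norm_num) (by norm_num),
    Real.log_pow, Real.log_pow, Real.log_pow] at this
  push_cast at this
  linarith

private lemma key1 : (9809721694:ℝ) * Real.log 2 < 6189245291 * Real.log 3 := by
  have z1 := series_bound (1/10) (by norm_num) (by norm_num) 24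
  have z2 := series_bound (1/25) (by norm_num) (by norm_num) 17
  have z3 := series_bound (1/81) (by norm_num) (by norm_num) 12
  simp_rw [Finset.sum_range_succ] at z1 z2 z3
  norm_num [abs_le] at z1 z2 z3
  rw [ident2, ident3]
  linarith

private lemma key2 : (397573379:ℝ) * (Real.log 3 + 1/(3*(19*2^58:ℝ))) < 630138897 * Real.log 2 := by
  have z1 := series_bound (1/10) (by norm_num) (by norm_num) 24
  have z2 := series_bound (1/25) (by norm_num) (by norm_num) 17
  have z3 := series_bound (1/81) (by norm_num) (by norm_num) 12
  simp_rw [Finset.sum_range_succ] at z1 z2 z3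
  norm_num [abs_le] at z1 z2 z3
  rw [ident2, ident3]
  norm_num
  linarith

theorem stmt_12 (m : ℕ) (hm : 1 ≤ m) (a : ℕ → ℕ)
    (hpos : ∀ i, 1 ≤ i → i ≤ m → 0 < a i)
    (hodd : ∀ i, 1 ≤ i → i ≤ m → Odd (a i))
    (hstep : ∀ i, 1 ≤ i → i < m → a (i + 1) = T (a i))
    (hloop : T (a m) = a 1)
    (hnontriv : ∀ i, 1 ≤ i → i ≤ m → a i ≠ 1)
    (amin : ℕ)
    (hamin : amin = (Finset.Icc 1 m).inf' (Finset.nonempty_Icc.mpr hm) a)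
    (hbig : 19 * 2 ^ 58 ≤ amin)
    (hbeta : (m : ℝ) * Real.logb 2 (1 + 1 / (3 * (amin : ℝ))) < 1) :
    6586818670 ≤ m := by
  set N : ℕ := 19 * 2 ^ 58 with hN
  set K : ℕ := ∑ i ∈ Icc 1 m, padicValNat 2 (3 * a i + 1) with hK
  set P : ℕ := ∏ i ∈ Icc 1 m, a i with hP
  have hPpos : 0 < P := Finset.prod_pos (fun i hi => by
    rw [mem_Icc] at hi; exact hpos i hi.1 hi.2)
  -- the lower bound N ≤ a i
  have hNle : ∀ i ∈ Icc 1 m, N ≤ a i := by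
    intro i hi
    calc N ≤ amin := hbig
    _ ≤ a i := by rw [hamin]; exact Finset.inf'_le a hi
  -- the cycle product identity
  have hident : P * 2 ^ K = ∏ i ∈ Icc 1 m, (3 * a i + 1) := by
    have hsucc : ∀ i ∈ Icc 1 m,
        (if i = m then a 1 else a (i+1)) * 2 ^ (padicValNat 2 (3 * a i + 1)) = 3 * a i + 1 := by
      intro i hi
      rw [mem_Icc] at hi
      by_cases h : i = m
      · subst h; simp only [if_pos rfl, ← hloop, T]
        exact Nat.div_mul_cancel pow_padicValNat_dvd
      · rw [if_neg h, hstep i hi.1 (lt_of_le_of_ne hi.2 h), T]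
        exact Nat.div_mul_cancel pow_padicValNat_dvd
    have hre : (∏ i ∈ Icc 1 m, (if i = m then a 1 else a (i+1))) = ∏ i ∈ Icc 1 m, a i := by
      apply Finset.prod_bij' (fun i _ => if i = m then 1 else i + 1)
        (fun j _ => if j = 1 then m else j - 1)
      · intro i hi; rw [mem_Icc] at hi ⊢
        by_cases h : i = m
        · simp [h, hm]
        · rw [if_neg h]; omega
      · intro j hj; rw [mem_Icc] at hj ⊢
        by_cases h : j = 1
        · simp [h, hm]
        · rw [if_neg h]; omega
      · intro i hi; rw [mem_Icc] at hi
        by_cases h : i = m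
        · simp [h]
        · rw [if_neg h, if_neg (by omega)]; omega
      · intro j hj; rw [mem_Icc] at hj
        by_cases h : j = 1
        · simp [h]
        · rw [if_neg h, if_neg (by omega)]; omega
      · intro i hi; rw [mem_Icc] at hi
        by_cases h : i = m
        · simp [h]
        · rw [if_neg h, if_neg (by omega)]
    calc P * 2 ^ K
        = (∏ i ∈ Icc 1 m, (if i = m then a 1 else a (i+1)))
            * ∏ i ∈ Icc 1 m, 2 ^ (padicValNat 2 (3 * a i + 1)) := by
          rw [hre, hP, hK, Finset.prod_pow_eq_pow_sum]
      _ = ∏ i ∈ Icc 1 m, ((if i = m then a 1 else a (i+1)) * 2 ^ (padicValNat 2 (3 * a i + 1))) := by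
          rw [Finset.prod_mul_distrib]
      _ = ∏ i ∈ Icc 1 m, (3 * a i + 1) := Finset.prod_congr rfl hsucc
  have hcard : (Icc 1 m).card = m := by simp
  -- lower bound : 3^m < 2^K
  have hlow : 3 ^ m < 2 ^ K := by
    have h1 : 3 ^ m * P ≤ P * 2 ^ K := by
      rw [hident]
      calc 3 ^ m * P = ∏ i ∈ Icc 1 m, (3 * a i) := by
            rw [Finset.prod_mul_distrib, Finset.prod_const, hcard, hP]
        _ ≤ ∏ i ∈ Icc 1 m, (3 * a i + 1) :=
            Finset.prod_le_prod' (fun i _ => Nat.le_succ _)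
    have h2 : 3 ^ m ≤ 2 ^ K := by
      have := Nat.mul_le_mul_left P h1 -- not needed; cancel directly
      exact Nat.le_of_mul_le_mul_right (by linarith [h1]) hPpos
    rcases lt_or_eq_of_le h2 with h | h
    · exact h
    · exfalso
      rcases Nat.eq_zero_or_pos K with hK0 | hK0
      · rw [hK0, pow_zero] at h
        have := Nat.one_le_two_pow (n := 0)
        have : m = 0 := by
          by_contra hm0
          have : 3 ^ 1 ≤ 3 ^ m := Nat.pow_le_pow_right (by norm_num) (by omega)
          omega
        omega
      · have h2dvd : 2 ∣ 3 ^ m := by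
          rw [h]; exact dvd_pow_self 2 (by omega)
        have : ¬ (2 ∣ 3 ^ m) := by
          intro hd
          have := Nat.Prime.dvd_of_dvd_pow (p := 2) Nat.prime_two hd
          omega
        exact this h2dvd
  -- upper bound : N^m * 2^K ≤ (3N+1)^m
  have hup : N ^ m * 2 ^ K ≤ (3 * N + 1) ^ m := by
    have h1 : N ^ m * (P * 2 ^ K) ≤ (3 * N + 1) ^ m * P := by
      rw [hident]
      calc N ^ m * ∏ i ∈ Icc 1 m, (3 * a i + 1)
          = ∏ i ∈ Icc 1 m, (N * (3 * a i + 1)) := by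
            rw [Finset.prod_mul_distrib, Finset.prod_const, hcard]
        _ ≤ ∏ i ∈ Icc 1 m, ((3 * N + 1) * a i) := by
            apply Finset.prod_le_prod'
            intro i hi
            have := hNle i hi
            nlinarith
        _ = (3 * N + 1) ^ m * P := by
            rw [Finset.prod_mul_distrib, Finset.prod_const, hcard, hP]
    have : N ^ m * 2 ^ K * P ≤ (3 * N + 1) ^ m * P := by ring_nf; ring_nf at h1; linarith
    exact Nat.le_of_mul_le_mul_right this hPpos
  -- pass to the reals
  have hlog2 : (0:ℝ) < Real.log 2 := Real.log_pos (by norm_num)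
  have hmR : (0:ℝ) < (m:ℝ) := by exact_mod_cast hm
  have hrlow : (m:ℝ) * Real.log 3 < (K:ℝ) * Real.log 2 := by
    have : ((3:ℝ)) ^ m < 2 ^ K := by exact_mod_cast hlow
    have := Real.log_lt_log (by positivity) this
    rwa [Real.log_pow, Real.log_pow] at this
  have hNR : ((N:ℝ)) = 19 * 2 ^ 58 := by rw [hN]; push_cast; ring
  have hNRpos : (0:ℝ) < (N:ℝ) := by rw [hNR]; norm_num
  have hrup : (K:ℝ) * Real.log 2 ≤ (m:ℝ) * (Real.log 3 + 1/(3*(19*2^58:ℝ))) := by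
    have h1 : ((N:ℝ)) ^ m * 2 ^ K ≤ (3 * N + 1) ^ m := by exact_mod_cast hup
    have h2 : ((2:ℝ)) ^ K ≤ ((3 * (N:ℝ) + 1)/(N:ℝ)) ^ m := by
      rw [div_pow, le_div_iff₀ (by positivity)]
      calc ((2:ℝ)) ^ K * (N:ℝ) ^ m = (N:ℝ) ^ m * 2 ^ K := by ring
        _ ≤ (3 * (N:ℝ) + 1) ^ m := h1
    have h3 := Real.log_le_log (by positivity) h2
    rw [Real.log_pow, Real.log_pow] at h3
    have h4 : Real.log ((3 * (N:ℝ) + 1)/(N:ℝ)) ≤ Real.log 3 + 1/(3*(19*2^58:ℝ)) := by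
      have e : (3 * (N:ℝ) + 1)/(N:ℝ) = 3 * (1 + 1/(3*(N:ℝ))) := by field_simp
      rw [e, Real.log_mul (by norm_num) (by positivity)]
      have h5 : Real.log (1 + 1/(3*(N:ℝ))) ≤ 1/(3*(N:ℝ)) := by
        have := Real.log_le_sub_one_of_pos (x := 1 + 1/(3*(N:ℝ))) (by positivity)
        linarith
      rw [hNR] at h5 ⊢
      linarith
    calc (K:ℝ) * Real.log 2 ≤ (m:ℝ) * Real.log ((3 * (N:ℝ) + 1)/(N:ℝ)) := h3
      _ ≤ (m:ℝ) * (Real.log 3 + 1/(3*(19*2^58:ℝ))) := by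
          apply mul_le_mul_of_nonneg_left h4 (le_of_lt hmR)
  -- Diophantine step
  have hd1 : m * 9809721694 < K * 6189245291 := by
    have : ((m:ℝ)) * 9809721694 * Real.log 2 < (K:ℝ) * 6189245291 * Real.log 2 := by
      calc ((m:ℝ)) * 9809721694 * Real.log 2 = (m:ℝ) * (9809721694 * Real.log 2) := by ring
        _ < (m:ℝ) * (6189245291 * Real.log 3) := by
            exact mul_lt_mul_of_pos_left key1 hmR
        _ = 6189245291 * ((m:ℝ) * Real.log 3) := by ring
        _ < 6189245291 * ((K:ℝ) * Real.log 2) := by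
            apply mul_lt_mul_of_pos_left hrlow (by norm_num)
        _ = (K:ℝ) * 6189245291 * Real.log 2 := by ring
    have := lt_of_mul_lt_mul_right this (le_of_lt hlog2)
    exact_mod_cast this
  have hd2 : K * 397573379 < m * 630138897 := by
    have : ((K:ℝ)) * 397573379 * Real.log 2 < (m:ℝ) * 630138897 * Real.log 2 := by
      calc ((K:ℝ)) * 397573379 * Real.log 2 = 397573379 * ((K:ℝ) * Real.log 2) := by ring
        _ ≤ 397573379 * ((m:ℝ) * (Real.log 3 + 1/(3*(19*2^58:ℝ)))) := by
            apply mul_le_mul_of_nonneg_left hrup (by norm_num)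
        _ = (m:ℝ) * (397573379 * (Real.log 3 + 1/(3*(19*2^58:ℝ)))) := by ring
        _ < (m:ℝ) * (630138897 * Real.log 2) := mul_lt_mul_of_pos_left key2 hmR
        _ = (m:ℝ) * 630138897 * Real.log 2 := by ring
    have := lt_of_mul_lt_mul_right this (le_of_lt hlog2)
    exact_mod_cast this
  -- mediant inequality
  have hz1 : (m:ℤ) * 9809721694 + 1 ≤ (K:ℤ) * 6189245291 := by exact_mod_cast hd1
  have hz2 : (K:ℤ) * 397573379 + 1 ≤ (m:ℤ) * 630138897 := by exact_mod_cast hd2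
  have : (6586818670:ℤ) ≤ (m:ℤ) := by
    have e : (m:ℤ) = 6189245291 * ((m:ℤ) * 630138897 - (K:ℤ) * 397573379)
        + 397573379 * ((K:ℤ) * 6189245291 - (m:ℤ) * 9809721694) := by ring
    omega
  exact_mod_cast this
end
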